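/- Let F⊂ℝ be compact with Lebesgue measure zero, fractal string (l_j), D∈(0,1) and L>0. If the S-content satisfies 𝓢^D(F) = 2^{1−D} L^D / (κ_{1−D}(1−D)), then l_j ~ L j^{−1/D} as j→∞. -/

import Mathlib

open Filter Set Topology MeasureTheory Metric ENNReal

/-- `κ_t = π^{t/2} / Γ(1 + t/2)`. -/
noncomputable def kappa (t : ℝ) : ℝ := Real.pi ^ (t / 2) / Real.Gamma (1 + t / 2)

/-- `(l_j)` is the fractal string of the compact set `F ⊂ ℝ`: a non-increasing sequence of
positive lengths of the (pairwise disjoint) bounded complementary open intervals of `F`. -/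
def IsFractalString (F : Set ℝ) (l : ℕ → ℝ) : Prop :=
  Antitone l ∧ (∀ j, 0 < l j) ∧
  ∃ a b : ℕ → ℝ,
    Pairwise (Function.onFun Disjoint fun j => Set.Ioo (a j) (b j)) ∧
    (∀ j, a j < b j ∧ b j - a j = l j) ∧
    (convexHull ℝ F) \ F = ⋃ j, Set.Ioo (a j) (b j)

/-- Lower S-content of `F ⊂ ℝ`: `liminf_{r→0} 𝓗⁰(∂F_r)/((1−D)κ_{1−D} r^{−D})`. -/
noncomputable def lowerSContent (F : Set ℝ) (D : ℝ) : ℝ≥0∞ :=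
  Filter.liminf
    (fun r : ℝ => μH[(0 : ℝ)] (frontier (cthickening r F)) /
      ENNReal.ofReal ((1 - D) * kappa (1 - D) * r ^ (-D)))
    (𝓝[>] (0 : ℝ))

/-- Upper S-content of `F ⊂ ℝ`. -/
noncomputable def upperSContent (F : Set ℝ) (D : ℝ) : ℝ≥0∞ :=
  Filter.limsup
    (fun r : ℝ => μH[(0 : ℝ)] (frontier (cthickening r F)) /
      ENNReal.ofReal ((1 - D) * kappa (1 - D) * r ^ (-D)))
    (𝓝[>] (0 : ℝ))

/-! For `r > 0` the closed `r`-neighbourhood of `F` is `[min F - r, max F + r]` with the open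
middle part `(a_j + r, b_j - r)` of every gap longer than `2r` removed, so its boundary consists
of `2 + 2 N(2r)` points, where `N t = gapCount l t` is the number of gaps longer than `t`. The
hypothesis thus says `(1 + N t) t^D → L^D` as `t → 0+`. Since `N (l_j) ≤ j < N t` for `t < l_j`,
evaluating at `t = l_j` and at `t` slightly below `l_j` squeezes `(j + 1) l_j^D` to `L^D`. -/

lemma frontier_Icc_sdiff_biUnion_Ioo {ι : Type*} {p q : ℝ} {c d : ι → ℝ} (T : Finset ι)
    (hpq : p ≤ q) (hcd : ∀ j ∈ T, c j < d j) (hsub : ∀ j ∈ T, Icc (c j) (d j) ⊆ Ioo p q)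
    (hdisj : (T : Set ι).PairwiseDisjoint fun j => Icc (c j) (d j)) :
    frontier (Icc p q \ ⋃ j ∈ T, Ioo (c j) (d j)) = {p, q} ∪ ⋃ j ∈ T, {c j, d j} := by
  have hclosure : ∀ j ∈ T, closure (Ioo (c j) (d j)) = Icc (c j) (d j) :=
    fun j hj => closure_Ioo (hcd j hj).ne
  have hinterior : interior (Icc p q \ ⋃ j ∈ T, Ioo (c j) (d j)) =
      Ioo p q \ ⋃ j ∈ T, Icc (c j) (d j) := by
    rw [sdiff_eq, interior_inter, interior_compl, interior_Icc, T.closure_biUnion,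
      iUnion₂_congr hclosure, sdiff_eq]
  have hopen : IsOpen (⋃ j ∈ T, Ioo (c j) (d j)) :=
    isOpen_iUnion fun _ => isOpen_iUnion fun _ => isOpen_Ioo
  have hsame : ∀ i ∈ T, ∀ j ∈ T, ∀ x ∈ Icc (c i) (d i), x ∈ Icc (c j) (d j) → i = j :=
    fun i hi j hj x hxi hxj => hdisj.elim hi hj (not_disjoint_iff.2 ⟨x, hxi, hxj⟩)
  have hc : ∀ j ∈ T, c j ∈ Icc (c j) (d j) := fun j hj => ⟨le_rfl, (hcd j hj).le⟩
  have hd : ∀ j ∈ T, d j ∈ Icc (c j) (d j) := fun j hj => ⟨(hcd j hj).le, le_rfl⟩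
  rw [(isClosed_Icc.sdiff hopen).frontier_eq, hinterior]
  ext x
  simp only [Set.mem_sdiff, mem_Icc, mem_Ioo, mem_iUnion, mem_union, mem_insert_iff,
    mem_singleton_iff, not_exists, not_and, exists_prop]
  constructor
  · rintro ⟨⟨⟨hpx, hxq⟩, hgap⟩, hbdry⟩
    by_cases hend : x = p ∨ x = q
    · exact Or.inl hend
    obtain ⟨j, hj, hcx, hxd⟩ : ∃ j ∈ T, c j ≤ x ∧ x ≤ d j := by
      by_contra! h
      exact hbdry ⟨lt_of_le_of_ne hpx (by tauto), lt_of_le_of_ne hxq (by tauto)⟩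
        fun j hj hcx hxd => (h j hj hcx).not_ge hxd
    refine Or.inr ⟨j, hj, ?_⟩
    by_contra! hne
    exact hgap j hj (lt_of_le_of_ne hcx hne.1.symm) (lt_of_le_of_ne hxd hne.2)
  · rintro ((rfl | rfl) | ⟨j, hj, rfl | rfl⟩)
    · exact ⟨⟨⟨le_rfl, hpq⟩, fun j hj h _ => (hsub j hj (hc j hj)).1.not_gt h⟩,
        fun h => h.1.false.elim⟩
    · exact ⟨⟨⟨hpq, le_rfl⟩, fun j hj _ h => (hsub j hj (hd j hj)).2.not_gt h⟩,
        fun h => h.2.false.elim⟩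
    · refine ⟨⟨mem_Icc.1 (Ioo_subset_Icc_self (hsub j hj (hc j hj))), fun i hi h h' => ?_⟩,
        fun _ h => h j hj le_rfl (hcd j hj).le⟩
      obtain rfl := hsame i hi j hj _ ⟨h.le, h'.le⟩ (hc j hj)
      exact h.false
    · refine ⟨⟨mem_Icc.1 (Ioo_subset_Icc_self (hsub j hj (hd j hj))), fun i hi h h' => ?_⟩,
        fun _ h => h j hj (hcd j hj).le le_rfl⟩
      obtain rfl := hsame i hi j hj _ ⟨h.le, h'.le⟩ (hd j hj)
      exact h'.false

lemma hausdorffMeasure_zero_pair {X : Type*} [EMetricSpace X] [MeasurableSpace X] [BorelSpace X]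
    {x y : X} (hxy : x ≠ y) : μH[0] ({x, y} : Set X) = 2 := by
  rw [insert_eq, measure_union (disjoint_singleton.2 hxy) (measurableSet_singleton y),
    Measure.hausdorffMeasure_zero_singleton, Measure.hausdorffMeasure_zero_singleton,
    one_add_one_eq_two]

lemma hausdorffMeasure_zero_pair_union_biUnion_pair {ι : Type*} {p q : ℝ} {c d : ι → ℝ}
    (T : Finset ι) (hpq : p < q) (hcd : ∀ j ∈ T, c j < d j)
    (hsub : ∀ j ∈ T, Icc (c j) (d j) ⊆ Ioo p q)
    (hdisj : (T : Set ι).PairwiseDisjoint fun j => Icc (c j) (d j)) :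
    μH[0] ({p, q} ∪ ⋃ j ∈ T, {c j, d j}) = 2 + 2 * T.card := by
  have hpair : ∀ j ∈ T, ({c j, d j} : Set ℝ) ⊆ Icc (c j) (d j) := fun j hj =>
    insert_subset ⟨le_rfl, (hcd j hj).le⟩ (singleton_subset_iff.2 ⟨(hcd j hj).le, le_rfl⟩)
  have hends : Disjoint ({p, q} : Set ℝ) (⋃ j ∈ T, {c j, d j}) := by
    refine disjoint_iUnion₂_right.2 fun j hj => .mono_right ((hpair j hj).trans (hsub j hj)) ?_
    simp
  rw [measure_union hends (T.measurableSet_biUnion fun j _ => (Set.toFinite _).measurableSet),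
    measure_biUnion_finset (fun i hi j hj hij => (hdisj hi hj hij).mono (hpair i hi) (hpair j hj))
      (fun j _ => (Set.toFinite _).measurableSet), hausdorffMeasure_zero_pair hpq.ne,
    Finset.sum_congr rfl fun j hj => hausdorffMeasure_zero_pair (hcd j hj).ne]
  simp [mul_comm]

lemma IsCompact.convexHull_eq_Icc {F : Set ℝ} (hF : IsCompact F) (hne : F.Nonempty) :
    convexHull ℝ F = Icc (sInf F) (sSup F) := by
  have hFI : F ⊆ Icc (sInf F) (sSup F) := fun x hx =>
    ⟨csInf_le hF.bddBelow hx, le_csSup hF.bddAbove hx⟩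
  refine (convexHull_min hFI (convex_Icc _ _)).antisymm ?_
  rw [← segment_eq_Icc (hFI (hF.sInf_mem hne)).2]
  exact segment_subset_convexHull (hF.sInf_mem hne) (hF.sSup_mem hne)

lemma endpoints_mem_of_sdiff_eq_iUnion_Ioo {ι : Type*} {s F : Set ℝ} {a b : ι → ℝ}
    (hs : IsClosed s) (hab : ∀ j, a j < b j)
    (hdisj : Pairwise (Function.onFun Disjoint fun j => Ioo (a j) (b j)))
    (hgaps : s \ F = ⋃ j, Ioo (a j) (b j)) (j : ι) : a j ∈ F ∧ b j ∈ F := by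
  have hclosure := closure_Ioo (hab j).ne
  have hIcc : Icc (a j) (b j) ⊆ s := by
    rw [← hclosure]
    exact closure_minimal ((subset_iUnion _ j).trans (hgaps ▸ sdiff_subset)) hs
  have hmem : ∀ x ∈ Icc (a j) (b j), x ∉ Ioo (a j) (b j) → x ∈ F := by
    intro x hx hxj
    by_contra hxF
    obtain ⟨i, hi⟩ := mem_iUnion.1 (hgaps ▸ ⟨hIcc hx, hxF⟩ : x ∈ ⋃ i, Ioo (a i) (b i))
    have hij : i ≠ j := by rintro rfl; exact hxj hi
    exact ((hdisj hij.symm).closure_left isOpen_Ioo).notMem_of_mem_left (hclosure ▸ hx) hi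
  exact ⟨hmem _ (left_mem_Icc.2 (hab j).le) (by simp),
    hmem _ (right_mem_Icc.2 (hab j).le) (by simp)⟩

lemma cthickening_eq_Icc_sdiff_iUnion_Ioo {ι : Type*} {F : Set ℝ} {m M r : ℝ} {a b : ι → ℝ}
    (hF : IsCompact F) (hr : 0 ≤ r) (hm : m ∈ F) (hM : M ∈ F) (hFI : F ⊆ Icc m M)
    (haF : ∀ j, a j ∈ F) (hbF : ∀ j, b j ∈ F) (hgaps : Icc m M \ F = ⋃ j, Ioo (a j) (b j)) :
    cthickening r F = Icc (m - r) (M + r) \ ⋃ j, Ioo (a j + r) (b j - r) := by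
  have hgapF : ∀ j, ∀ y ∈ Ioo (a j) (b j), y ∉ F := fun j y hy =>
    ((hgaps.symm ▸ mem_iUnion_of_mem j hy : y ∈ Icc m M \ F)).2
  ext x
  simp only [hF.cthickening_eq_biUnion_closedBall hr, mem_iUnion, mem_closedBall, Real.dist_eq,
    abs_le, exists_prop, Set.mem_sdiff, mem_Icc, mem_Ioo, not_exists, not_and]
  constructor
  · rintro ⟨y, hyF, hxy₁, hxy₂⟩
    refine ⟨⟨by linarith [(hFI hyF).1], by linarith [(hFI hyF).2]⟩, fun j h₁ h₂ => ?_⟩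
    exact hgapF j y ⟨by linarith, by linarith⟩ hyF
  · rintro ⟨⟨hx₁, hx₂⟩, hholes⟩
    by_cases hxm : x ≤ m
    · exact ⟨m, hm, by linarith, by linarith⟩
    by_cases hxM : M ≤ x
    · exact ⟨M, hM, by linarith, by linarith⟩
    by_cases hxF : x ∈ F
    · exact ⟨x, hxF, by linarith, by linarith⟩
    obtain ⟨j, hj₁, hj₂⟩ := mem_iUnion.1
      (hgaps ▸ ⟨⟨(not_le.1 hxm).le, (not_le.1 hxM).le⟩, hxF⟩ : x ∈ ⋃ j, Ioo (a j) (b j))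
    by_cases hxa : x ≤ a j + r
    · exact ⟨a j, haF j, by linarith, by linarith⟩
    by_cases hxb : b j - r ≤ x
    · exact ⟨b j, hbF j, by linarith, by linarith⟩
    exact (hholes j (not_le.1 hxa) (not_le.1 hxb)).elim

noncomputable def gapCount (l : ℕ → ℝ) (t : ℝ) : ℕ := {j | t < l j}.ncard

section GapCount

variable {l : ℕ → ℝ} {t : ℝ}

lemma finite_setOf_lt_of_tendsto_zero (hl : Tendsto l atTop (𝓝 0)) (ht : 0 < t) :
    {j | t < l j}.Finite := by
  have h := hl.eventually (gt_mem_nhds ht)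
  rw [← Nat.cofinite_eq_atTop, eventually_cofinite] at h
  exact h.subset fun _ hj => lt_asymm hj

lemma gapCount_apply_le (hl : Antitone l) (j : ℕ) : gapCount l (l j) ≤ j := by
  have hsub : {i | l j < l i} ⊆ Iio j := fun i hi => not_le.1 fun hji => (hl hji).not_gt hi
  simpa [gapCount] using Set.ncard_le_ncard hsub (finite_Iio j)

lemma lt_gapCount (hl : Antitone l) (hfin : {i | t < l i}.Finite) {j : ℕ} (ht : t < l j) :
    j < gapCount l t := by
  have hsub : Iic j ⊆ {i | t < l i} := fun i hi => ht.trans_le (hl hi)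
  simpa [gapCount] using Set.ncard_le_ncard hsub hfin

end GapCount

namespace IsFractalString

variable {F : Set ℝ} {l : ℕ → ℝ}

lemma nonempty (hl : IsFractalString F l) : F.Nonempty := by
  obtain ⟨-, -, a, b, -, hab, hgaps⟩ := hl
  by_contra hF
  rw [not_nonempty_iff_eq_empty] at hF
  have hmid : (a 0 + b 0) / 2 ∈ ⋃ j, Ioo (a j) (b j) :=
    mem_iUnion_of_mem 0 ⟨by linarith [(hab 0).1], by linarith [(hab 0).1]⟩
  simp [← hgaps, hF] at hmid

lemma tendsto_atTop_zero (hF : IsCompact F) (hl : IsFractalString F l) :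
    Tendsto l atTop (𝓝 0) := by
  obtain ⟨a, b, hdisj, hab, hgaps⟩ := hl.2.2
  have hvol : ∑' j, volume (Ioo (a j) (b j)) ≠ ∞ := by
    rw [← measure_iUnion hdisj fun _ => measurableSet_Ioo, ← hgaps,
      hF.convexHull_eq_Icc hl.nonempty]
    exact ((measure_mono sdiff_subset).trans_lt measure_Icc_lt_top).ne
  simpa [Real.volume_Ioo, (hab _).2, (hl.2.1 _).le] using
    (ENNReal.summable_toReal hvol).tendsto_atTop_zero

lemma hausdorffMeasure_zero_frontier_cthickening (hF : IsCompact F) (hl : IsFractalString F l)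
    {r : ℝ} (hr : 0 < r) :
    μH[0] (frontier (cthickening r F)) = 2 + 2 * (gapCount l (2 * r) : ℝ≥0∞) := by
  obtain ⟨a, b, hdisj, hab, hgaps⟩ := hl.2.2
  rw [hF.convexHull_eq_Icc hl.nonempty] at hgaps
  set m := sInf F
  set M := sSup F
  have hm : m ∈ F := hF.sInf_mem hl.nonempty
  have hM : M ∈ F := hF.sSup_mem hl.nonempty
  have hFI : F ⊆ Icc m M := fun x hx => ⟨csInf_le hF.bddBelow hx, le_csSup hF.bddAbove hx⟩
  have hends :=
    endpoints_mem_of_sdiff_eq_iUnion_Ioo isClosed_Icc (fun j => (hab j).1) hdisj hgaps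
  have hfin :=
    finite_setOf_lt_of_tendsto_zero (hl.tendsto_atTop_zero hF) (by positivity : 0 < 2 * r)
  set T := hfin.toFinset
  have hT : ∀ j, j ∈ T ↔ a j + r < b j - r := fun j => by
    simp only [T, Finite.mem_toFinset, mem_ofPred_eq, ← (hab j).2]
    constructor <;> intro h <;> linarith
  have hholes : ⋃ j, Ioo (a j + r) (b j - r) = ⋃ j ∈ T, Ioo (a j + r) (b j - r) := by
    ext x
    simp only [mem_iUnion, exists_prop, mem_Ioo, hT]
    exact ⟨fun ⟨j, h₁, h₂⟩ => ⟨j, h₁.trans h₂, h₁, h₂⟩, fun ⟨j, _, h⟩ => ⟨j, h⟩⟩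
  have hcd : ∀ j ∈ T, a j + r < b j - r := fun j hj => (hT j).1 hj
  have hsub : ∀ j ∈ T, Icc (a j + r) (b j - r) ⊆ Ioo (a j) (b j) := fun j _ x hx =>
    ⟨by linarith [hx.1], by linarith [hx.2]⟩
  have hdisj' : (T : Set ℕ).PairwiseDisjoint fun j => Icc (a j + r) (b j - r) :=
    fun i hi j hj hij => (hdisj hij).mono (hsub i hi) (hsub j hj)
  have hsub' : ∀ j ∈ T, Icc (a j + r) (b j - r) ⊆ Ioo (m - r) (M + r) := fun j hj x hx =>
    ⟨by linarith [(hFI (hends j).1).1, (hsub j hj hx).1],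
      by linarith [(hFI (hends j).2).2, (hsub j hj hx).2]⟩
  have hmM : m - r < M + r := by linarith [(hFI hm).2]
  rw [cthickening_eq_Icc_sdiff_iUnion_Ioo hF hr.le hm hM hFI (fun j => (hends j).1)
    (fun j => (hends j).2) hgaps, hholes,
    frontier_Icc_sdiff_biUnion_Ioo T hmM.le hcd hsub' hdisj',
    hausdorffMeasure_zero_pair_union_biUnion_pair T hmM hcd hsub' hdisj', gapCount,
    ncard_eq_toFinset_card _ hfin]

end IsFractalString

lemma tendsto_succ_mul_rpow_of_tendsto_gapCount {l : ℕ → ℝ} {D A : ℝ} (hanti : Antitone l)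
    (hpos : ∀ j, 0 < l j) (hl0 : Tendsto l atTop (𝓝 0))
    (h : Tendsto (fun t : ℝ => (1 + gapCount l t : ℝ) * t ^ D) (𝓝[>] 0) (𝓝 A)) :
    Tendsto (fun j : ℕ => (j + 1 : ℝ) * l j ^ D) atTop (𝓝 A) := by
  set c : ℕ → ℝ := fun j => (j + 1) / (j + 2)
  have hc0 : ∀ j, 0 < c j := fun j => by positivity
  have hc : Tendsto c atTop (𝓝 1) := by
    refine ((tendsto_natCast_div_add_atTop (1 : ℝ)).comp (tendsto_add_atTop_nat 1)).congr
      fun j => ?_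
    simp only [c, Function.comp_apply]
    push_cast
    ring
  have hlc : ∀ j, c j * l j < l j := fun j =>
    mul_lt_of_lt_one_left (hpos j) ((div_lt_one (by positivity)).2 (by linarith))
  have hlower : ∀ j, (1 + gapCount l (l j) : ℝ) * l j ^ D ≤ (j + 1) * l j ^ D := fun j => by
    have : (gapCount l (l j) : ℝ) ≤ j := by exact_mod_cast gapCount_apply_le hanti j
    exact mul_le_mul_of_nonneg_right (by linarith) (Real.rpow_nonneg (hpos j).le D)
  have hupper : ∀ j : ℕ, (j + 1 : ℝ) * l j ^ D ≤
      (1 + gapCount l (c j * l j) : ℝ) * (c j * l j) ^ D / c j ^ D := fun j => by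
    have hfin := finite_setOf_lt_of_tendsto_zero hl0 (mul_pos (hc0 j) (hpos j))
    have : (j + 1 : ℝ) ≤ gapCount l (c j * l j) := by
      exact_mod_cast lt_gapCount hanti hfin (hlc j)
    have hcD : 0 < c j ^ D := Real.rpow_pos_of_pos (hc0 j) D
    have hlD : 0 < l j ^ D := Real.rpow_pos_of_pos (hpos j) D
    rw [Real.mul_rpow (hc0 j).le (hpos j).le, le_div_iff₀ hcD]
    nlinarith [mul_pos hcD hlD]
  have hl : Tendsto l atTop (𝓝[>] 0) := tendsto_nhdsWithin_iff.2 ⟨hl0, .of_forall hpos⟩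
  have hcl : Tendsto (fun j => c j * l j) atTop (𝓝[>] 0) :=
    tendsto_nhdsWithin_iff.2
      ⟨by simpa using hc.mul hl0, .of_forall fun j => mul_pos (hc0 j) (hpos j)⟩
  refine tendsto_of_tendsto_of_tendsto_of_le_of_le (h.comp hl) ?_ hlower hupper
  have hcD : Tendsto (fun j => c j ^ D) atTop (𝓝 1) := by
    simpa only [Real.one_rpow] using hc.rpow_const (Or.inl one_ne_zero)
  exact div_one A ▸ (h.comp hcl).div hcD one_ne_zero

lemma tendsto_mul_rpow_one_div_of_tendsto_succ_mul_rpow {x : ℕ → ℝ} {D L : ℝ} (hD : 0 < D)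
    (hL : 0 ≤ L) (hx : ∀ j, 0 ≤ x j)
    (h : Tendsto (fun j : ℕ => (j + 1 : ℝ) * x j ^ D) atTop (𝓝 (L ^ D))) :
    Tendsto (fun j : ℕ => x j * (j : ℝ) ^ (1 / D)) atTop (𝓝 L) := by
  have hj : Tendsto (fun j : ℕ => (j : ℝ) * x j ^ D) atTop (𝓝 (L ^ D)) := by
    refine (mul_one (L ^ D) ▸ h.mul (tendsto_natCast_div_add_atTop (1 : ℝ))).congr fun j => ?_
    field_simp
  have hroot := hj.rpow_const (Or.inr (by positivity : 0 ≤ 1 / D))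
  rw [← Real.rpow_mul hL, mul_one_div_cancel hD.ne', Real.rpow_one] at hroot
  refine hroot.congr fun j => ?_
  rw [Real.mul_rpow j.cast_nonneg (Real.rpow_nonneg (hx j) D), ← Real.rpow_mul (hx j),
    mul_one_div_cancel hD.ne', Real.rpow_one, mul_comm]

lemma tendsto_nhdsGT_zero_of_tendsto_comp_mul {α : Type*} {f : ℝ → α} {l : Filter α} {x : ℝ}
    (hx : 0 < x) (h : Tendsto (fun r => f (x * r)) (𝓝[>] 0) l) : Tendsto f (𝓝[>] 0) l := by
  rw [← map_comap_of_surjective (mul_left_surjective₀ hx.ne') (𝓝[>] 0),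
    comap_mulLeft_nhdsGT_zero hx, tendsto_map'_iff]
  exact h

lemma kappa_pos {t : ℝ} (ht : -2 < t) : 0 < kappa t :=
  div_pos (Real.rpow_pos_of_pos Real.pi_pos _) (Real.Gamma_pos_of_pos (by linarith))

lemma tendsto_one_add_mul_rpow_of_tendsto_div {N : ℝ → ℕ} {c D A : ℝ} (hc : 0 < c)
    (hA : 0 ≤ A)
    (h : Tendsto (fun r : ℝ => (2 + 2 * (N (2 * r) : ℝ≥0∞)) / ENNReal.ofReal (c * r ^ (-D)))
      (𝓝[>] 0) (𝓝 (ENNReal.ofReal (2 ^ (1 - D) * A / c)))) :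
    Tendsto (fun t : ℝ => (1 + N t : ℝ) * t ^ D) (𝓝[>] 0) (𝓝 A) := by
  have hreal : Tendsto (fun r : ℝ => (2 + 2 * N (2 * r) : ℝ) / (c * r ^ (-D))) (𝓝[>] 0)
      (𝓝 (2 ^ (1 - D) * A / c)) := by
    rw [← ENNReal.toReal_ofReal (by positivity : 0 ≤ 2 ^ (1 - D) * A / c)]
    refine ((ENNReal.tendsto_toReal ENNReal.ofReal_ne_top).comp h).congr' ?_
    filter_upwards [self_mem_nhdsWithin] with r (hr : 0 < r)
    have hcount : (2 + 2 * (N (2 * r) : ℝ≥0∞)).toReal = 2 + 2 * N (2 * r) := by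
      exact_mod_cast ENNReal.toReal_natCast (2 + 2 * N (2 * r))
    simp [hcount, ENNReal.toReal_ofReal, hr.le, hc.le, Real.rpow_nonneg]
  have hlim : 2 ^ (1 - D) * A / c * (c * 2 ^ D / 2) = A := by
    rw [Real.rpow_sub two_pos, Real.rpow_one]
    field_simp
  apply tendsto_nhdsGT_zero_of_tendsto_comp_mul two_pos
  refine (hlim ▸ hreal.mul_const (c * 2 ^ D / 2)).congr' ?_
  filter_upwards [self_mem_nhdsWithin] with r (hr : 0 < r)
  rw [Real.mul_rpow two_pos.le hr.le, Real.rpow_neg hr.le]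
  field_simp

theorem string_asymptotics_of_scontent_eq_general (F : Set ℝ) (hF : IsCompact F)
    (l : ℕ → ℝ) (hl : IsFractalString F l)
    (D : ℝ) (hD : D ∈ Set.Ioo (0 : ℝ) 1) (L : ℝ) (hL : 0 < L)
    (hS : Filter.Tendsto
      (fun r : ℝ => μH[(0 : ℝ)] (frontier (cthickening r F)) /
        ENNReal.ofReal ((1 - D) * kappa (1 - D) * r ^ (-D)))
      (𝓝[>] (0 : ℝ))
      (𝓝 (ENNReal.ofReal ((2 : ℝ) ^ (1 - D) * L ^ D / (kappa (1 - D) * (1 - D)))))) :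
    Filter.Tendsto (fun j : ℕ => l j * (j : ℝ) ^ (1 / D)) Filter.atTop (𝓝 L) := by
  have hc : 0 < (1 - D) * kappa (1 - D) :=
    mul_pos (sub_pos.2 hD.2) (kappa_pos (by linarith [hD.2]))
  have hcount : Tendsto (fun t : ℝ => (1 + gapCount l t : ℝ) * t ^ D) (𝓝[>] 0) (𝓝 (L ^ D)) := by
    refine tendsto_one_add_mul_rpow_of_tendsto_div hc (Real.rpow_nonneg hL.le D) ?_
    rw [mul_comm (kappa _)] at hS
    refine hS.congr' ?_
    filter_upwards [self_mem_nhdsWithin] with r (hr : 0 < r)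
    rw [hl.hausdorffMeasure_zero_frontier_cthickening hF hr]
  exact tendsto_mul_rpow_one_div_of_tendsto_succ_mul_rpow hD.1 hL.le (fun j => (hl.2.1 j).le)
    (tendsto_succ_mul_rpow_of_tendsto_gapCount hl.1 hl.2.1 (hl.tendsto_atTop_zero hF) hcount)

theorem string_asymptotics_of_scontent_eq (F : Set ℝ) (hF : IsCompact F)
    (hF0 : volume F = 0) (l : ℕ → ℝ) (hl : IsFractalString F l)
    (D : ℝ) (hD : D ∈ Set.Ioo (0 : ℝ) 1) (L : ℝ) (hL : 0 < L)
    (hS : Filter.Tendsto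
      (fun r : ℝ => μH[(0 : ℝ)] (frontier (cthickening r F)) /
        ENNReal.ofReal ((1 - D) * kappa (1 - D) * r ^ (-D)))
      (𝓝[>] (0 : ℝ))
      (𝓝 (ENNReal.ofReal ((2 : ℝ) ^ (1 - D) * L ^ D / (kappa (1 - D) * (1 - D)))))) :
    Filter.Tendsto (fun j : ℕ => l j * (j : ℝ) ^ (1 / D)) Filter.atTop (𝓝 L) :=
  string_asymptotics_of_scontent_eq_general F hF l hl D hD L hL hS
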